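/- arXiv:1812.11153 — 10 statements merged into one kernel-verified Lean document; each statement's English description precedes it below -/
import Mathlib

section
/- If $l, r_1, \dots, r_m$ are natural numbers and $r = \lfloor (r_1 + \cdots + r_m)/m \rfloor$, then $\sum_{i=1}^m \binom{r_i}{l} \ge m \binom{r}{l}$. -/
lemma choose_up (l a : ℕ) : ∀ b, a ≤ b →
    Nat.choose a (l+1) + (b - a) * Nat.choose (a-1) l ≤ Nat.choose b (l+1) := by
  intro b hb
  induction b, hb using Nat.le_induction with
  | base => simp
  | succ n hn ih =>
    have h1 : Nat.choose (a-1) l ≤ Nat.choose n l :=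
      Nat.choose_le_choose _ (le_trans (Nat.sub_le a 1) hn)
    have h2 : Nat.choose (n+1) (l+1) = Nat.choose n l + Nat.choose n (l+1) :=
      Nat.choose_succ_succ n l
    have h3 : n + 1 - a = (n - a) + 1 := by omega
    calc Nat.choose a (l+1) + (n + 1 - a) * Nat.choose (a-1) l
        = (Nat.choose a (l+1) + (n - a) * Nat.choose (a-1) l) + Nat.choose (a-1) l := by
          rw [h3, Nat.succ_mul]; ring
      _ ≤ Nat.choose n (l+1) + Nat.choose n l := Nat.add_le_add ih h1
      _ = Nat.choose (n+1) (l+1) := by rw [h2]; ring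

lemma choose_down (l a : ℕ) : ∀ b, a ≤ b →
    Nat.choose b (l+1) ≤ Nat.choose a (l+1) + (b - a) * Nat.choose (b-1) l := by
  intro b hb
  induction b, hb using Nat.le_induction with
  | base => simp
  | succ n hn ih =>
    have h1 : Nat.choose (n-1) l ≤ Nat.choose n l :=
      Nat.choose_le_choose _ (Nat.sub_le n 1)
    have h2 : Nat.choose (n+1) (l+1) = Nat.choose n l + Nat.choose n (l+1) :=
      Nat.choose_succ_succ n l
    have h3 : n + 1 - a = (n - a) + 1 := by omega
    calc Nat.choose (n+1) (l+1)
        = Nat.choose n (l+1) + Nat.choose n l := by rw [h2]; ring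
      _ ≤ (Nat.choose a (l+1) + (n - a) * Nat.choose (n-1) l) + Nat.choose n l :=
          Nat.add_le_add ih le_rfl
      _ ≤ (Nat.choose a (l+1) + (n - a) * Nat.choose n l) + Nat.choose n l :=
          Nat.add_le_add (Nat.add_le_add le_rfl (Nat.mul_le_mul_left _ h1)) le_rfl
      _ = Nat.choose a (l+1) + (n + 1 - a) * Nat.choose n l := by
          rw [h3, Nat.succ_mul]; ring

lemma tangent (l q n : ℕ) :
    Nat.choose q (l+1) + n * Nat.choose (q-1) l ≤
      Nat.choose n (l+1) + q * Nat.choose (q-1) l := by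
  rcases le_or_gt q n with h | h
  · have := choose_up l q n h
    have hn : n * Nat.choose (q-1) l = (n - q) * Nat.choose (q-1) l
        + q * Nat.choose (q-1) l := by
      rw [← Nat.add_mul]; congr 1; omega
    omega
  · have := choose_down l n q h.le
    have hw : Nat.choose (q-1) l ≤ Nat.choose (q-1) l := le_rfl
    have hq : q * Nat.choose (q-1) l = (q - n) * Nat.choose (q-1) l
        + n * Nat.choose (q-1) l := by
      rw [← Nat.add_mul]; congr 1; omega
    omega

theorem stmt_0 (m l : ℕ) (hm : 1 ≤ m) (r : Fin m → ℕ) :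
    m * Nat.choose ((∑ i, r i) / m) l ≤ ∑ i, Nat.choose (r i) l := by
  cases l with
  | zero => simp
  | succ l =>
    set s := ∑ i, r i with hs
    set q := s / m with hq
    set w := Nat.choose (q-1) l with hw
    have key : ∀ i : Fin m, Nat.choose q (l+1) + r i * w ≤ Nat.choose (r i) (l+1) + q * w :=
      fun i => tangent l q (r i)
    have hsum : ∑ i, (Nat.choose q (l+1) + r i * w) ≤ ∑ i, (Nat.choose (r i) (l+1) + q * w) :=
      Finset.sum_le_sum (fun i _ => key i)
    rw [Finset.sum_add_distrib, Finset.sum_add_distrib, Finset.sum_const,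
      Finset.sum_const, ← Finset.sum_mul] at hsum
    simp only [Finset.card_univ, Fintype.card_fin, smul_eq_mul, ← hs] at hsum
    have hle : m * q * w ≤ s * w := by
      apply Nat.mul_le_mul_right
      rw [hq, mul_comm]
      exact Nat.div_mul_le_self s m
    have h1 : m * Nat.choose q (l+1) + s * w ≤ (∑ i, Nat.choose (r i) (l+1)) + m * q * w := by
      calc m * Nat.choose q (l+1) + s * w ≤ (∑ i, Nat.choose (r i) (l+1)) + m * (q * w) := hsum
        _ = (∑ i, Nat.choose (r i) (l+1)) + m * q * w := by ring
    omega
end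

section
/- Let $2 \le k < n$ and $\mathcal{F} \subseteq \binom{[n]}{k}$. Then the number of $(k-1)$-subsets $D$ of $[n]$ with exactly one superset in $\mathcal{F}$ satisfies $|\{D \in \binom{[n]}{k-1} : |\bigtriangledown_{\mathcal{F}}(D)| = 1\}| \le \frac{n\binom{n-1}{k-1} - k|\mathcal{F}|}{n-k}$. -/
theorem stmt_3 (n k : ℕ) (hk : 2 ≤ k) (hkn : k < n)
    (F : Finset (Finset ℕ)) (hF : F ⊆ (Finset.Icc 1 n).powersetCard k) :
    (n - k) * (((Finset.Icc 1 n).powersetCard (k - 1)).filter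
        (fun D => (F.filter (fun B => D ⊆ B)).card = 1)).card
      + k * F.card ≤ n * Nat.choose (n - 1) (k - 1) := by
  classical
  set S := Finset.Icc 1 n with hS
  have hScard : S.card = n := by simp [hS]
  set P := S.powersetCard (k - 1) with hP
  set Pk := S.powersetCard k with hPk
  -- double counting lemma
  have swap : ∀ (G : Finset (Finset ℕ)), G ⊆ Pk →
      ∑ D ∈ P, (G.filter (fun B => D ⊆ B)).card = k * G.card := by
    intro G hG
    have hcomm : ∑ D ∈ P, (G.filter (fun B => D ⊆ B)).card
        = ∑ B ∈ G, (P.filter (fun D => D ⊆ B)).card := by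
      simp_rw [Finset.card_filter]
      rw [Finset.sum_comm]
    rw [hcomm]
    have hB : ∀ B ∈ G, (P.filter (fun D => D ⊆ B)).card = k := by
      intro B hBG
      have hBmem := hG hBG
      rw [hPk, Finset.mem_powersetCard] at hBmem
      have heq : P.filter (fun D => D ⊆ B) = B.powersetCard (k-1) := by
        ext D
        simp only [Finset.mem_filter, hP, Finset.mem_powersetCard]
        constructor
        · rintro ⟨⟨_, hc⟩, hDB⟩; exact ⟨hDB, hc⟩
        · rintro ⟨hDB, hc⟩; exact ⟨⟨hDB.trans hBmem.1, hc⟩, hDB⟩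
      rw [heq, Finset.card_powersetCard, hBmem.2]
      obtain ⟨j, rfl⟩ : ∃ j, k = j + 1 := ⟨k - 1, by omega⟩
      simp [Nat.choose_succ_self_right]
    rw [Finset.sum_congr rfl hB, Finset.sum_const, smul_eq_mul, mul_comm]
  have hsum_deg : ∑ D ∈ P, (F.filter (fun B => D ⊆ B)).card = k * F.card :=
    swap F hF
  have hsum_Deg : ∑ D ∈ P, (Pk.filter (fun B => D ⊆ B)).card = k * Nat.choose n k := by
    rw [swap Pk (subset_refl _), hPk, Finset.card_powersetCard, hScard]
  have hle : ∀ D, (F.filter (fun B => D ⊆ B)).card ≤ (Pk.filter (fun B => D ⊆ B)).card := by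
    intro D
    exact Finset.card_le_card (Finset.filter_subset_filter _ hF)
  have hDeg_lb : ∀ D ∈ P, n - k + 1 ≤ (Pk.filter (fun B => D ⊆ B)).card := by
    intro D hD
    rw [hP, Finset.mem_powersetCard] at hD
    have himg : (S \ D).image (fun x => insert x D) ⊆ Pk.filter (fun B => D ⊆ B) := by
      intro B hBmem
      simp only [Finset.mem_image, Finset.mem_sdiff] at hBmem
      obtain ⟨x, ⟨hxS, hxD⟩, rfl⟩ := hBmem
      rw [Finset.mem_filter, hPk, Finset.mem_powersetCard]
      refine ⟨⟨Finset.insert_subset hxS hD.1, ?_⟩, Finset.subset_insert _ _⟩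
      rw [Finset.card_insert_of_notMem hxD, hD.2]
      omega
    have hinj : Set.InjOn (fun x => insert x D) ((S \ D : Finset ℕ) : Set ℕ) := by
      intro x hx y hy hxy
      simp only [Finset.coe_sdiff, Set.mem_diff, Finset.mem_coe] at hx hy
      have hmem : x ∈ insert y D := by
        have h := Finset.mem_insert_self x D
        rwa [show insert x D = insert y D from hxy] at h
      rcases Finset.mem_insert.mp hmem with h | h
      · exact h
      · exact absurd h hx.2
    have hcard : ((S \ D).image (fun x => insert x D)).card = n - k + 1 := by
      rw [Finset.card_image_of_injOn hinj, Finset.card_sdiff_of_subset hD.1, hScard, hD.2]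
      omega
    calc n - k + 1 = ((S \ D).image (fun x => insert x D)).card := hcard.symm
      _ ≤ _ := Finset.card_le_card himg
  set D1 := P.filter (fun D => (F.filter (fun B => D ⊆ B)).card = 1) with hD1
  have h1 : (n - k) * D1.card ≤
      ∑ D ∈ P, ((Pk.filter (fun B => D ⊆ B)).card - (F.filter (fun B => D ⊆ B)).card) := by
    calc (n - k) * D1.card = ∑ D ∈ D1, (n - k) := by
          rw [Finset.sum_const, smul_eq_mul, mul_comm]
      _ ≤ ∑ D ∈ D1, ((Pk.filter (fun B => D ⊆ B)).card - (F.filter (fun B => D ⊆ B)).card) := by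
          apply Finset.sum_le_sum
          intro D hD
          rw [hD1, Finset.mem_filter] at hD
          have := hDeg_lb D hD.1
          rw [hD.2]
          omega
      _ ≤ _ := Finset.sum_le_sum_of_subset (Finset.filter_subset _ _)
  have h2 : ∑ D ∈ P, ((Pk.filter (fun B => D ⊆ B)).card - (F.filter (fun B => D ⊆ B)).card)
      + k * F.card = k * Nat.choose n k := by
    rw [← hsum_deg, ← Finset.sum_add_distrib, ← hsum_Deg]
    apply Finset.sum_congr rfl
    intro D _
    have := hle D
    omega
  have hfinal : k * Nat.choose n k = n * Nat.choose (n - 1) (k - 1) := by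
    obtain ⟨m, rfl⟩ : ∃ m, n = m + 1 := ⟨n - 1, by omega⟩
    obtain ⟨j, rfl⟩ : ∃ j, k = j + 1 := ⟨k - 1, by omega⟩
    simp only [Nat.add_sub_cancel]
    rw [Nat.add_one_mul_choose_eq]
    exact mul_comm _ _
  omega
end

section
/- Let $2 \le k \le n/2$ and suppose $\mathcal{F}^* \subseteq \mathcal{F} \subseteq \binom{[n]}{k}$ have the property that whenever $B, B' \in \mathcal{F}$ satisfy $B \cap B' = \emptyset$, then both $B, B' \in \mathcal{F}^*$. Then $|\mathcal{F}^*| + \frac{n}{k}|\mathcal{F} \setminus \mathcal{F}^*| \le \binom{n}{k}$. -/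
/-!
Katona's circle method. Label the ground set by `ZMod n` through a bijection `e`; of the `n`
arcs of `k` consecutive points, let `S` be those whose image lies in `F*` and `D` those whose
image lies in `F \ F*`. Every arc of `D` meets every arc of `S ∪ D`, so for `t ∈ D` all these
arcs start in the `2k` points `arc t ∪ arc (t - k)`, and the starts of `D` inject into the unused
ones by pairing each start with the one `k` steps away, whose arc is disjoint from it. Hence
`#S + 2 #D ≤ 2k`, which gives `k #S + n #D ≤ k n`. Summed over all bijections `e`, every `k`-set
is the image of an arc equally often, and the inequality becomes
`k |F*| + n |F \ F*| ≤ k (n choose k)`.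
-/

open Finset
open scoped Nat

def arc (n k : ℕ) (s : ZMod n) : Finset (ZMod n) :=
  (range k).image fun i : ℕ => s + i

lemma ZMod.natCast_inj_of_lt {n i j : ℕ} (hi : i < n) (hj : j < n) (h : (i : ZMod n) = j) :
    i = j := by
  rwa [ZMod.natCast_eq_natCast_iff', Nat.mod_eq_of_lt hi, Nat.mod_eq_of_lt hj] at h

section Arc

variable {n k : ℕ}

lemma mem_arc {s x : ZMod n} : x ∈ arc n k s ↔ ∃ i < k, s + i = x := by
  simp [arc]

lemma card_arc (hkn : k ≤ n) (s : ZMod n) : #(arc n k s) = k := by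
  rw [arc, card_image_of_injOn, card_range]
  intro i hi j hj hij
  exact ZMod.natCast_inj_of_lt (by simp at hi; omega) (by simp at hj; omega) (add_left_cancel hij)

lemma add_mem_arc_add {s x : ZMod n} (c : ZMod n) (hx : x ∈ arc n k s) :
    x + c ∈ arc n k (s + c) := by
  obtain ⟨i, hi, rfl⟩ := mem_arc.1 hx
  exact mem_arc.2 ⟨i, hi, by ring⟩

lemma disjoint_arc_sub (hkn : 2 * k ≤ n) (s : ZMod n) :
    Disjoint (arc n k s) (arc n k (s - k)) := by
  refine disjoint_left.2 fun x hx hx' => ?_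
  obtain ⟨i, hi, rfl⟩ := mem_arc.1 hx
  obtain ⟨j, hj, hij⟩ := mem_arc.1 hx'
  have : j = i + k := ZMod.natCast_inj_of_lt (n := n) (i := j) (j := i + k) (by omega) (by omega)
    (by push_cast; linear_combination hij)
  omega

lemma mem_arc_union_arc_sub_of_not_disjoint {s t : ZMod n}
    (h : ¬Disjoint (arc n k s) (arc n k t)) : s ∈ arc n k t ∪ arc n k (t - k) := by
  obtain ⟨x, hxs, hxt⟩ := not_disjoint_iff.1 h
  obtain ⟨i, hi, rfl⟩ := mem_arc.1 hxs
  obtain ⟨j, hj, hij⟩ := mem_arc.1 hxt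
  rw [mem_union, mem_arc, mem_arc]
  rcases le_or_gt i j with hle | hlt
  · exact Or.inl ⟨j - i, by omega, by push_cast [hle]; linear_combination hij⟩
  · exact Or.inr ⟨k - (i - j), by omega, by
      push_cast [hlt.le, (by omega : i - j ≤ k)]; linear_combination hij⟩

variable {S D : Finset (ZMod n)}

lemma card_add_two_mul_card_le_of_not_disjoint_arc (hkn : 2 * k ≤ n) (hSD : Disjoint S D)
    (h : ∀ s ∈ S ∪ D, ∀ t ∈ D, ¬Disjoint (arc n k s) (arc n k t)) {t : ZMod n} (ht : t ∈ D) :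
    #S + 2 * #D ≤ 2 * k := by
  set W := arc n k t ∪ arc n k (t - k)
  have hW : #W = 2 * k := by
    rw [card_union_of_disjoint (disjoint_arc_sub hkn t), card_arc (by omega), card_arc (by omega)]
    ring
  have hSDW : S ∪ D ⊆ W := fun s hs => mem_arc_union_arc_sub_of_not_disjoint (h s hs t ht)
  set g : ZMod n → ZMod n := fun x => if x ∈ arc n k t then x - k else x + k
  have hg : ∀ x ∈ W, Disjoint (arc n k x) (arc n k (g x)) := by
    intro x _
    by_cases hx : x ∈ arc n k t
    · simpa [g, hx] using disjoint_arc_sub hkn x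
    · simpa [g, hx] using (disjoint_arc_sub hkn (x + k)).symm
  have hgW : ∀ x ∈ W, g x ∈ W ∧ g (g x) = x := by
    intro x hxW
    by_cases hx : x ∈ arc n k t
    · have hgx : x - k ∈ arc n k (t - k) := by
        simpa [sub_eq_add_neg] using add_mem_arc_add (-k : ZMod n) hx
      have hgx' : x - k ∉ arc n k t := disjoint_right.1 (disjoint_arc_sub hkn t) hgx
      simp [g, W, hx, hgx, hgx']
    · have hx' : x ∈ arc n k (t - k) := by simpa [W, hx] using hxW
      have hgx : x + k ∈ arc n k t := by simpa using add_mem_arc_add (k : ZMod n) hx'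
      simp [g, W, hx, hgx]
  have hmaps : Set.MapsTo g D ↑(W \ (S ∪ D)) := by
    intro x hx
    have hxW := hSDW (mem_union_right S hx)
    exact mem_sdiff.2 ⟨(hgW x hxW).1, fun hgx => h _ hgx x hx (hg x hxW).symm⟩
  have hinj : Set.InjOn g D :=
    Set.LeftInvOn.injOn (f₁' := g) fun x hx => (hgW x (hSDW (mem_union_right S hx))).2
  have hSD_le := card_le_card hSDW
  have hD_le := card_le_card_of_injOn g hmaps hinj
  rw [card_sdiff_of_subset hSDW, hW, card_union_of_disjoint hSD] at hD_le
  rw [hW, card_union_of_disjoint hSD] at hSD_le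
  omega

lemma mul_card_add_mul_card_le_of_not_disjoint_arc [NeZero n] (hkn : 2 * k ≤ n)
    (hSD : Disjoint S D)
    (h : ∀ s ∈ S ∪ D, ∀ t ∈ D, ¬Disjoint (arc n k s) (arc n k t)) :
    k * #S + n * #D ≤ k * n := by
  obtain rfl | ⟨t, ht⟩ := D.eq_empty_or_nonempty
  · simpa using Nat.mul_le_mul_left k (card_le_univ S)
  · have := card_add_two_mul_card_le_of_not_disjoint_arc hkn hSD h ht
    -- `k #S + n #D ≤ 2k² + (n - 2k) #D` and `#D ≤ k`
    have hD : #D * (n - 2 * k) ≤ k * (n - 2 * k) := Nat.mul_le_mul_right _ (by omega)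
    zify [hkn] at hD ⊢
    nlinarith

end Arc

open scoped Pointwise in
lemma Finset.exists_perm_image_eq {α : Type*} [DecidableEq α] {A B : Finset α} (h : #A = #B) :
    ∃ π : Equiv.Perm α, A.image π = B := by
  obtain ⟨π, hπ⟩ := (Set.powersetCard.isPretransitive (α := α) (n := #B)).exists_smul_eq
    ⟨A, h⟩ ⟨B, rfl⟩
  exact ⟨π, congrArg Subtype.val hπ⟩

section Counting

variable {n k : ℕ} {α β : Type*} [Fintype α] [Fintype β] [DecidableEq α] [DecidableEq β]

lemma card_filter_image_eq_congr {A A' : Finset α} {X X' : Finset β}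
    (hA : #A = #A') (hX : #X = #X') :
    #{e : α ≃ β | A.image e = X} = #{e : α ≃ β | A'.image e = X'} := by
  obtain ⟨π, hπ⟩ := exists_perm_image_eq hA.symm
  obtain ⟨τ, hτ⟩ := exists_perm_image_eq hX
  refine card_equiv (π.symm.equivCongr τ) fun e => ?_
  simp only [mem_filter, mem_univ, true_and]
  rw [← hτ, ← (image_injective τ.injective).eq_iff, ← hπ, image_image, image_image]
  rfl

lemma sum_card_filter_image_arc_mem [NeZero n] (hkn : k ≤ n) {G : Finset (Finset α)}
    (hG : ∀ X ∈ G, #X = k) {X₀ : Finset α} (hX₀ : #X₀ = k) :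
    ∑ e : ZMod n ≃ α, #{s | (arc n k s).image e ∈ G}
      = #G * (n * #{e : ZMod n ≃ α | (arc n k 0).image e = X₀}) := by
  calc ∑ e : ZMod n ≃ α, #{s | (arc n k s).image e ∈ G}
      = ∑ e : ZMod n ≃ α, ∑ s, ∑ X ∈ G, if (arc n k s).image e = X then 1 else 0 := by
        simp only [card_filter, sum_ite_eq]
    _ = ∑ X ∈ G, ∑ s, #{e : ZMod n ≃ α | (arc n k s).image e = X} := by
        simp only [card_filter]
        rw [sum_comm]
        exact (sum_congr rfl fun s _ => sum_comm).trans sum_comm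
    _ = ∑ X ∈ G, ∑ s : ZMod n, #{e : ZMod n ≃ α | (arc n k 0).image e = X₀} := by
        refine sum_congr rfl fun X hX => sum_congr rfl fun s _ => ?_
        exact card_filter_image_eq_congr (by rw [card_arc hkn, card_arc hkn])
          (by rw [hG X hX, hX₀])
    _ = #G * (n * #{e : ZMod n ≃ α | (arc n k 0).image e = X₀}) := by
        simp [ZMod.card]

theorem mul_card_add_mul_card_sdiff_le [NeZero n] (hkn : 2 * k ≤ n) (hα : Fintype.card α = n)
    {F Fs : Finset (Finset α)} (hFs : Fs ⊆ F) (hF : ∀ B ∈ F, #B = k)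
    (hFs_of_disjoint : ∀ B ∈ F, ∀ B' ∈ F, Disjoint B B' → B' ∈ Fs) :
    k * #Fs + n * #(F \ Fs) ≤ k * n.choose k := by
  have e₀ : ZMod n ≃ α := Fintype.equivOfCardEq (by rw [ZMod.card, hα])
  set N := #{e : ZMod n ≃ α | (arc n k 0).image e = (arc n k 0).image e₀}
  have hN : 0 < N := card_pos.2 ⟨e₀, by simp⟩
  have hcount (G : Finset (Finset α)) (hG : ∀ X ∈ G, #X = k) :
      ∑ e : ZMod n ≃ α, #{s | (arc n k s).image e ∈ G} = #G * (n * N) :=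
    sum_card_filter_image_arc_mem (by omega) hG
      (by rw [card_image_of_injective _ e₀.injective, card_arc (by omega)])
  have hchoose : n ! * n = n.choose k * (n * N) := by
    have hall (e : ZMod n ≃ α) : #{s | (arc n k s).image e ∈ powersetCard k univ} = n := by
      rw [filter_true_of_mem, Finset.card_univ, ZMod.card]
      intro s _
      rw [mem_powersetCard, card_image_of_injective _ e.injective, card_arc (by omega)]
      exact ⟨subset_univ _, rfl⟩
    have := hcount (powersetCard k univ) fun X hX => (mem_powersetCard.1 hX).2
    rwa [Finset.card_powersetCard, Finset.card_univ, hα, sum_congr rfl fun e _ => hall e,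
      sum_const, Finset.card_univ, Fintype.card_equiv e₀, ZMod.card, smul_eq_mul] at this
  have hper (e : ZMod n ≃ α) :
      k * #{s | (arc n k s).image e ∈ Fs} + n * #{s | (arc n k s).image e ∈ F \ Fs} ≤ k * n := by
    refine mul_card_add_mul_card_le_of_not_disjoint_arc hkn
      (disjoint_filter.2 fun s _ h h' => (mem_sdiff.1 h').2 h) ?_
    intro s hs t ht hst
    simp only [mem_union, mem_filter, mem_univ, true_and, mem_sdiff] at hs ht
    have hsF : (arc n k s).image e ∈ F := hs.elim (fun h => hFs h) And.left
    exact ht.2 (hFs_of_disjoint _ hsF _ ht.1 ((disjoint_image e.injective).2 hst))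
  have hsum := sum_le_sum fun e (_ : e ∈ univ) => hper e
  rw [sum_add_distrib, ← mul_sum, ← mul_sum, hcount Fs fun B hB => hF B (hFs hB),
    hcount (F \ Fs) fun B hB => hF B (mem_sdiff.1 hB).1, sum_const, Finset.card_univ,
    Fintype.card_equiv e₀, ZMod.card, smul_eq_mul] at hsum
  refine Nat.le_of_mul_le_mul_right (?_ : _ * (n * N) ≤ _ * (n * N))
    (Nat.mul_pos (NeZero.pos n) hN)
  calc (k * #Fs + n * #(F \ Fs)) * (n * N)
      = k * (#Fs * (n * N)) + n * (#(F \ Fs) * (n * N)) := by ring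
    _ ≤ n ! * (k * n) := hsum
    _ = k * n.choose k * (n * N) := by rw [mul_assoc k, ← hchoose]; ring

end Counting

theorem mul_card_add_mul_card_sdiff_le_of_subset {n k : ℕ} {β : Type*} [DecidableEq β]
    [NeZero n] (hkn : 2 * k ≤ n) {U : Finset β} (hU : #U = n)
    {F Fs : Finset (Finset β)} (hFs : Fs ⊆ F) (hF : ∀ B ∈ F, B ⊆ U ∧ #B = k)
    (hFs_of_disjoint : ∀ B ∈ F, ∀ B' ∈ F, Disjoint B B' → B' ∈ Fs) :
    k * #Fs + n * #(F \ Fs) ≤ k * n.choose k := by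
  set ι := Function.Embedding.subtype (· ∈ U)
  let pull (G : Finset (Finset β)) : Finset (Finset U) :=
    G.preimage (map ι) (map_injective ι).injOn
  have card_pull {G} (hG : G ⊆ F) : #(pull G) = #G := by
    classical
    rw [card_preimage, filter_true_of_mem]
    intro B hB
    exact ⟨B.subtype (· ∈ U), subtype_map_of_mem (hF B (hG hB)).1⟩
  have pull_sdiff : pull (F \ Fs) = pull F \ pull Fs := by
    ext B
    simp [pull]
  have := mul_card_add_mul_card_sdiff_le (α := U) hkn (by simp [hU]) (F := pull F)
    (Fs := pull Fs) (monotone_preimage (map_injective ι) hFs)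
    (fun B hB => by rw [← card_map ι]; exact (hF _ (mem_preimage.1 hB)).2)
    (fun B hB B' hB' hBB' => mem_preimage.2 <|
      hFs_of_disjoint _ (mem_preimage.1 hB) _ (mem_preimage.1 hB') ((disjoint_map ι).2 hBB'))
  rwa [← pull_sdiff, card_pull hFs, card_pull sdiff_subset] at this

theorem stmt_4 (n k : ℕ) (hk : 2 ≤ k) (hkn : 2 * k ≤ n)
    (F Fs : Finset (Finset ℕ)) (hFs : Fs ⊆ F)
    (hF : F ⊆ (Finset.Icc 1 n).powersetCard k)
    (hprop : ∀ B ∈ F, ∀ B' ∈ F, B ∩ B' = ∅ → B ∈ Fs ∧ B' ∈ Fs) :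
    (Fs.card : ℚ) + (n / k : ℚ) * (F \ Fs).card ≤ Nat.choose n k := by
  have : NeZero n := ⟨by omega⟩
  have hcount := mul_card_add_mul_card_sdiff_le_of_subset hkn (U := Icc 1 n) (by simp) hFs
    (fun B hB => mem_powersetCard.1 (hF hB))
    (fun B hB B' hB' h => (hprop B hB B' hB' (disjoint_iff_inter_eq_empty.1 h)).2)
  have hk0 : (0 : ℚ) < k := by exact_mod_cast (by omega : 0 < k)
  refine le_of_mul_le_mul_left ?_ hk0
  rw [mul_add, ← mul_assoc, mul_div_cancel₀ _ hk0.ne']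
  exact_mod_cast hcount
end

section
/- Let $3 \le d \le k$ and $n \ge dk/(d-1)$. Suppose $\mathcal{F}^* \subseteq \mathcal{F} \subseteq \binom{[n]}{k}$ has the property that every $d$-cluster in $\mathcal{F}$ is contained in $\mathcal{F}^*$. Fix $x \in [n]$. If $\{D_1, \dots, D_{d-1}\} \subseteq \triangle_x(\mathcal{F})$ is a $(d-1)$-cluster (of $(k-1)$-sets), then for each $i \in [d-1]$, either $|\bigtriangledown_{\mathcal{F}}(D_i)| = 1$ or $D_i \in \triangle_x(\mathcal{F}^*)$. -/
/-- A `d`-cluster of `k`-sets: `d` distinct sets with empty common intersection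
and union of size at most `2k`. -/
def IsCluster (k d : ℕ) (C : Finset (Finset ℕ)) : Prop :=
  C.card = d ∧ (C.sup id).card ≤ 2 * k ∧ ∀ y : ℕ, ∃ B ∈ C, y ∉ B

theorem stmt_6 (n k d : ℕ) (hd : 3 ≤ d) (hdk : d ≤ k) (hn : d * k ≤ (d - 1) * n)
    (F Fs : Finset (Finset ℕ)) (hFs : Fs ⊆ F)
    (hF : F ⊆ (Finset.Icc 1 n).powersetCard k)
    (hprop : ∀ C ⊆ F, IsCluster k d C → C ⊆ Fs)
    (x : ℕ) (hx : x ∈ Finset.Icc 1 n)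
    (D : Finset (Finset ℕ))
    (hD : D ⊆ ((Finset.Icc 1 n).powersetCard (k - 1)).filter (fun A => A ∪ {x} ∈ F))
    (hDclus : IsCluster (k - 1) (d - 1) D) :
    ∀ A ∈ D, (F.filter (fun B => A ⊆ B)).card = 1 ∨
      A ∈ ((Finset.Icc 1 n).powersetCard (k - 1)).filter (fun A => A ∪ {x} ∈ Fs) := by
  intro A hA
  obtain ⟨hDcard, hDsup, hDint⟩ := hDclus
  have hmem : ∀ S ∈ D, S.card = k - 1 ∧ S ⊆ Finset.Icc 1 n ∧ S ∪ {x} ∈ F ∧ x ∉ S := by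
    intro S hS
    have h := hD hS
    rw [Finset.mem_filter, Finset.mem_powersetCard] at h
    obtain ⟨⟨hsub, hcard⟩, hSF⟩ := h
    have hxS : x ∉ S := by
      intro hx'
      have heq : S ∪ {x} = S :=
        Finset.union_eq_left.mpr (Finset.singleton_subset_iff.mpr hx')
      rw [heq] at hSF
      have h2 := hF hSF
      rw [Finset.mem_powersetCard] at h2
      have := h2.2
      omega
    exact ⟨hcard, hsub, hSF, hxS⟩
  obtain ⟨hAcard, hAsub, hAF, hxA⟩ := hmem A hA
  by_cases h1 : (F.filter (fun B => A ⊆ B)).card = 1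
  · exact Or.inl h1
  right
  have hAxmem : A ∪ {x} ∈ F.filter (fun B => A ⊆ B) :=
    Finset.mem_filter.mpr ⟨hAF, Finset.subset_union_left⟩
  have h2 : 1 < (F.filter (fun B => A ⊆ B)).card := by
    have := Finset.card_pos.mpr ⟨_, hAxmem⟩
    omega
  obtain ⟨B, hB, hBne⟩ := Finset.exists_mem_ne h2 (A ∪ {x})
  rw [Finset.mem_filter] at hB
  obtain ⟨hBF, hAB⟩ := hB
  have hBcard : B.card = k := by
    have h := hF hBF; rw [Finset.mem_powersetCard] at h; exact h.2
  have hAxcard : (A ∪ {x}).card = k := by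
    have h := hF hAF; rw [Finset.mem_powersetCard] at h; exact h.2
  have hxB : x ∉ B := by
    intro hxB
    apply hBne
    have hsub : A ∪ {x} ⊆ B := by
      rw [Finset.union_subset_iff]
      exact ⟨hAB, Finset.singleton_subset_iff.mpr hxB⟩
    exact (Finset.eq_of_subset_of_card_le hsub (by omega)).symm
  set C : Finset (Finset ℕ) := insert B (D.image (fun S => S ∪ {x})) with hC
  have hBnotim : B ∉ D.image (fun S => S ∪ {x}) := by
    simp only [Finset.mem_image]
    rintro ⟨S, hS, rfl⟩
    exact hxB (Finset.mem_union_right _ (Finset.mem_singleton_self x))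
  have himcard : (D.image (fun S => S ∪ {x})).card = d - 1 := by
    rw [Finset.card_image_of_injOn, hDcard]
    intro S hS T hT hST
    have hxS := (hmem S hS).2.2.2
    have hxT := (hmem T hT).2.2.2
    have e : ∀ W : Finset ℕ, W ∪ {x} = insert x W := fun W => by
      rw [Finset.union_comm, ← Finset.insert_eq]
    have h := congrArg (fun t => Finset.erase t x) hST
    simpa [e, Finset.erase_insert hxS, Finset.erase_insert hxT] using h
  have hCcard : C.card = d := by
    rw [hC, Finset.card_insert_of_notMem hBnotim, himcard]; omega
  have hCF : C ⊆ F := by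
    intro S hS
    rw [hC, Finset.mem_insert] at hS
    rcases hS with rfl | hS
    · exact hBF
    · obtain ⟨T, hT, rfl⟩ := Finset.mem_image.mp hS
      exact (hmem T hT).2.2.1
  have hsupA : A ⊆ D.sup id := Finset.le_sup (f := id) hA
  have hsup : C.sup id ⊆ (D.sup id ∪ {x}) ∪ (B \ A) := by
    intro y hy
    rw [Finset.mem_sup] at hy
    obtain ⟨S, hS, hyS⟩ := hy
    rw [hC, Finset.mem_insert] at hS
    rcases hS with rfl | hS
    · by_cases hyA : y ∈ A
      · exact Finset.mem_union_left _ (Finset.mem_union_left _ (hsupA hyA))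
      · exact Finset.mem_union_right _ (Finset.mem_sdiff.mpr ⟨hyS, hyA⟩)
    · obtain ⟨T, hT, rfl⟩ := Finset.mem_image.mp hS
      have hTsup : T ⊆ D.sup id := Finset.le_sup (f := id) hT
      rcases Finset.mem_union.mp hyS with hyT | hyx
      · exact Finset.mem_union_left _ (Finset.mem_union_left _ (hTsup hyT))
      · exact Finset.mem_union_left _ (Finset.mem_union_right _ hyx)
  have hBAcard : (B \ A).card ≤ 1 := by
    have := Finset.card_sdiff_of_subset hAB
    omega
  have hCsup : (C.sup id).card ≤ 2 * k := by
    have c1 : (C.sup id).card ≤ ((D.sup id ∪ {x}) ∪ (B \ A)).card :=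
      Finset.card_le_card hsup
    have c2 : ((D.sup id ∪ {x}) ∪ (B \ A)).card ≤ (D.sup id ∪ {x}).card + (B \ A).card :=
      Finset.card_union_le _ _
    have c3 : (D.sup id ∪ {x}).card ≤ (D.sup id).card + 1 := by
      have := Finset.card_union_le (D.sup id) ({x} : Finset ℕ)
      simpa using this
    omega
  have hCint : ∀ y : ℕ, ∃ S ∈ C, y ∉ S := by
    intro y
    by_cases hyx : y = x
    · subst hyx
      exact ⟨B, Finset.mem_insert_self _ _, hxB⟩
    · obtain ⟨T, hT, hyT⟩ := hDint y
      refine ⟨T ∪ {x}, Finset.mem_insert_of_mem (Finset.mem_image_of_mem _ hT), ?_⟩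
      simp [hyT, hyx]
  have hCFs := hprop C hCF ⟨hCcard, hCsup, hCint⟩
  have hfin : A ∪ {x} ∈ Fs :=
    hCFs (Finset.mem_insert_of_mem (Finset.mem_image_of_mem _ hA))
  exact Finset.mem_filter.mpr ⟨Finset.mem_powersetCard.mpr ⟨hAsub, hAcard⟩, hfin⟩
end

section
/- Let $2 \le d \le k$ and $n \ge 2k-d+2$, and suppose $\mathcal{F} \subseteq \binom{[n]}{k}$ contains no simple $d$-cluster. Then for any $B, B' \in \mathcal{F}$ with $|\alpha_{\mathcal{F}}(B) \cap B'| \ge d-2$, we have $|B \cap B'| \ge d-1$. -/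
/-- `F` contains a simple `d`-cluster: `d` distinct sets `B, B', B₁, …, B_{d-2}`
with `B ∩ B' = {a₁, …, a_{d-2}}` (the `aᵢ` distinct) and `B \ Bᵢ = {aᵢ}`. -/
def HasSimpleCluster (d : ℕ) (F : Finset (Finset ℕ)) : Prop :=
  ∃ (B B' : Finset ℕ) (a : Fin (d - 2) → ℕ) (C : Fin (d - 2) → Finset ℕ),
    B ∈ F ∧ B' ∈ F ∧ (∀ i, C i ∈ F) ∧ Function.Injective a ∧
    B ∩ B' = Finset.image a Finset.univ ∧ (∀ i, B \ C i = {a i}) ∧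
    (insert B (insert B' (Finset.image C Finset.univ))).card = d

theorem stmt_11 (n k d : ℕ) (hd : 2 ≤ d) (hdk : d ≤ k) (hn : 2 * k - d + 2 ≤ n)
    (F : Finset (Finset ℕ)) (hF : F ⊆ (Finset.Icc 1 n).powersetCard k)
    (hfree : ¬ HasSimpleCluster d F)
    (B B' : Finset ℕ) (hB : B ∈ F) (hB' : B' ∈ F)
    (hα : d - 2 ≤ ((B.filter (fun y => ∃ C ∈ F, B \ C = {y})) ∩ B').card) :
    d - 1 ≤ (B ∩ B').card := by
  by_contra hlt
  push_neg at hlt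
  have hBk : B.card = k := (Finset.mem_powersetCard.mp (hF hB)).2
  have hsub : (B.filter (fun y => ∃ C ∈ F, B \ C = {y})) ∩ B' ⊆ B ∩ B' :=
    Finset.inter_subset_inter (Finset.filter_subset _ _) (le_refl _)
  have hle2 : (B ∩ B').card ≤ d - 2 := by omega
  have hcard : (B ∩ B').card = d - 2 :=
    le_antisymm hle2 (hα.trans (Finset.card_le_card hsub))
  have heq : (B.filter (fun y => ∃ C ∈ F, B \ C = {y})) ∩ B' = B ∩ B' :=
    Finset.eq_of_subset_of_card_le hsub (by omega)
  have halpha : ∀ y ∈ B ∩ B', ∃ C ∈ F, B \ C = {y} := by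
    intro y hy
    rw [← heq] at hy
    exact (Finset.mem_filter.mp (Finset.mem_inter.mp hy).1).2
  have e := (B ∩ B').equivFinOfCardEq hcard
  set a : Fin (d - 2) → ℕ := fun i => ((e.symm i : (B ∩ B' : Finset ℕ)) : ℕ) with ha
  have hainj : Function.Injective a := fun i j h => e.symm.injective (Subtype.ext h)
  have hamem : ∀ i, a i ∈ B ∩ B' := fun i => (e.symm i).2
  have haim : B ∩ B' = Finset.image a Finset.univ := by
    ext x
    simp only [Finset.mem_image, Finset.mem_univ, true_and]
    constructor
    · intro hx
      exact ⟨e ⟨x, hx⟩, by simp [ha]⟩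
    · rintro ⟨i, rfl⟩
      exact hamem i
  choose C hCF hCB using fun i => halpha (a i) (hamem i)
  apply hfree
  refine ⟨B, B', a, C, hB, hB', hCF, hainj, haim, hCB, ?_⟩
  have hBB' : B ≠ B' := by
    intro h
    rw [← h, Finset.inter_self, hBk] at hcard
    omega
  have hBC : ∀ i, B ≠ C i := by
    intro i h
    have := hCB i
    rw [h, Finset.sdiff_self] at this
    exact absurd this.symm (Finset.singleton_ne_empty _)
  have hcap : ∀ i, (B ∩ C i).card = k - 1 := by
    intro i
    have h1 : (B \ C i).card = 1 := by rw [hCB i]; simp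
    have h2 := Finset.card_inter_add_card_sdiff B (C i)
    omega
  have hB'C : ∀ i, B' ≠ C i := by
    intro i h
    have h1 := hcap i
    rw [← h, hcard] at h1
    omega
  have hCinj : Function.Injective C := by
    intro i j h
    apply hainj
    have : ({a i} : Finset ℕ) = {a j} := by rw [← hCB i, ← hCB j, h]
    exact Finset.singleton_injective this
  have hmem1 : B' ∉ Finset.image C Finset.univ := by
    simp only [Finset.mem_image, Finset.mem_univ, true_and, not_exists]
    exact fun i h => hB'C i h.symm
  have hmem2 : B ∉ insert B' (Finset.image C Finset.univ) := by
    simp only [Finset.mem_insert, Finset.mem_image, Finset.mem_univ, true_and, not_or,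
      not_exists]
    exact ⟨hBB', fun i h => hBC i h.symm⟩
  rw [Finset.card_insert_of_notMem hmem2, Finset.card_insert_of_notMem hmem1,
    Finset.card_image_of_injective _ hCinj, Finset.card_univ, Fintype.card_fin]
  omega
end

section
/- Let $2 \le k < n$, $x \in [n]$, and $\mathcal{F} \subseteq \binom{[n]}{k}$ contain no simple $d$-cluster (for some $2 \le d \le k$, $n \ge 2k-d+2$). Then every $D \in \mathcal{S}_x(\mathcal{F})$ satisfies $|\bigtriangledown_{\mathcal{F}}(D)| = 1$, and consequently $\triangle_x(\mathcal{F}) \cap \mathcal{S}_x(\mathcal{F}) = \emptyset$. -/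
/-- `α_F(B)`: elements `y ∈ B` such that `B \ B' = {y}` for some `B' ∈ F`. -/
def alphaSet (F : Finset (Finset ℕ)) (B : Finset ℕ) : Finset ℕ :=
  B.filter (fun y => ∃ B' ∈ F, B \ B' = {y})

/-- `S_x(F)`: the `(k-1)`-subsets of `[n] \ {x}` of the form `B \ {y}` with
`B ∈ F`, `x ∉ B`, `y ∈ B` and `y ∉ α_F(B)`. -/
def Sx (n k x : ℕ) (F : Finset (Finset ℕ)) : Finset (Finset ℕ) :=
  ((Finset.Icc 1 n \ {x}).powersetCard (k - 1)).filter
    (fun D => ∃ B ∈ F, x ∉ B ∧ ∃ y ∈ B, y ∉ alphaSet F B ∧ D ∪ {y} = B)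

theorem stmt_13 (n k d : ℕ) (hk : 2 ≤ k) (hkn : k < n)
    (hd : 2 ≤ d) (hdk : d ≤ k) (hn : 2 * k - d + 2 ≤ n)
    (x : ℕ) (hx : x ∈ Finset.Icc 1 n)
    (F : Finset (Finset ℕ)) (hF : F ⊆ (Finset.Icc 1 n).powersetCard k)
    (hfree : ¬ HasSimpleCluster d F) :
    (∀ D ∈ Sx n k x F, (F.filter (fun B => D ⊆ B)).card = 1) ∧
    (((Finset.Icc 1 n).powersetCard (k - 1)).filter (fun D => D ∪ {x} ∈ F)) ∩
      Sx n k x F = ∅ := by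
  have main : ∀ D ∈ Sx n k x F, (F.filter (fun B => D ⊆ B)).card = 1 := by
    intro D hD
    rw [Sx, Finset.mem_filter] at hD
    obtain ⟨hD1, B, hBF, hxB, y, hyB, hyα, hDy⟩ := hD
    have hBcard : B.card = k := (Finset.mem_powersetCard.mp (hF hBF)).2
    rw [Finset.mem_powersetCard] at hD1
    have hDcard : D.card = k - 1 := hD1.2
    have hyD : y ∉ D := by
      intro h
      have : D ∪ {y} = D := by
        rw [Finset.union_eq_left]; simp [h]
      rw [this] at hDy
      rw [hDy] at hDcard
      omega
    rw [Finset.card_eq_one]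
    refine ⟨B, ?_⟩
    ext B''
    simp only [Finset.mem_filter, Finset.mem_singleton]
    constructor
    · rintro ⟨hB''F, hDB''⟩
      by_contra hne
      have hB''card : B''.card = k := (Finset.mem_powersetCard.mp (hF hB''F)).2
      have hsd : (B'' \ D).card = 1 := by
        rw [Finset.card_sdiff_of_subset hDB'', hB''card, hDcard]; omega
      obtain ⟨z, hz⟩ := Finset.card_eq_one.mp hsd
      have hB''eq : B'' = D ∪ {z} := by
        rw [← hz, Finset.union_sdiff_of_subset hDB'']
      have hzy : z ≠ y := by
        intro h
        apply hne
        rw [hB''eq, h, hDy]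
      have hBB'' : B \ B'' = {y} := by
        rw [← hDy, hB''eq]
        ext a
        simp only [Finset.mem_sdiff, Finset.mem_union, Finset.mem_singleton]
        constructor
        · rintro ⟨h1 | h1, h2⟩
          · exact absurd (Or.inl h1) h2
          · exact h1
        · rintro rfl
          exact ⟨Or.inr rfl, by rintro (h | h); exact hyD h; exact hzy h.symm⟩
      apply hyα
      rw [alphaSet, Finset.mem_filter]
      exact ⟨hyB, B'', hB''F, hBB''⟩
    · rintro rfl
      exact ⟨hBF, by rw [← hDy]; exact Finset.subset_union_left⟩
  refine ⟨main, ?_⟩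
  rw [Finset.eq_empty_iff_forall_notMem]
  intro D hD
  rw [Finset.mem_inter, Finset.mem_filter] at hD
  obtain ⟨⟨hD1, hDxF⟩, hDSx⟩ := hD
  have h1 := main D hDSx
  rw [Sx, Finset.mem_filter] at hDSx
  obtain ⟨hD2, B, hBF, hxB, y, hyB, hyα, hDy⟩ := hDSx
  rw [Finset.mem_powersetCard] at hD2
  have hxD : x ∉ D := by
    intro h
    have := hD2.1 h
    simp at this
  obtain ⟨a, ha⟩ := Finset.card_eq_one.mp h1
  have h2 : D ∪ {x} ∈ F.filter (fun B => D ⊆ B) :=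
    Finset.mem_filter.mpr ⟨hDxF, Finset.subset_union_left⟩
  have h3 : B ∈ F.filter (fun B => D ⊆ B) :=
    Finset.mem_filter.mpr ⟨hBF, by rw [← hDy]; exact Finset.subset_union_left⟩
  rw [ha, Finset.mem_singleton] at h2 h3
  apply hxB
  rw [h3, ← h2]
  simp
end

section
/- Let $2 \le d \le k$, $n \ge 2k-d+2$, $x \in [n]$, and suppose $\mathcal{F} \subseteq \binom{[n]}{k}$ contains no simple $d$-cluster. Then $\triangle_x(\mathcal{F}) \cap \mathcal{R}_x(\mathcal{F}) = \emptyset$. -/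
/-- `R_x(F)`: the `(k-1)`-subsets `D` of `[n] \ {x}` such that `D ∩ B` is a
`(d-2)`-element subset of `α_F(B)` for some `B ∈ F` with `x ∉ B`. -/
def Rx (n k d x : ℕ) (F : Finset (Finset ℕ)) : Finset (Finset ℕ) :=
  ((Finset.Icc 1 n \ {x}).powersetCard (k - 1)).filter
    (fun D => ∃ B ∈ F, x ∉ B ∧ D ∩ B ⊆ alphaSet F B ∧ (D ∩ B).card = d - 2)

theorem stmt_14 (n k d : ℕ) (hd : 2 ≤ d) (hdk : d ≤ k) (hn : 2 * k - d + 2 ≤ n)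
    (x : ℕ) (hx : x ∈ Finset.Icc 1 n)
    (F : Finset (Finset ℕ)) (hF : F ⊆ (Finset.Icc 1 n).powersetCard k)
    (hfree : ¬ HasSimpleCluster d F) :
    (((Finset.Icc 1 n).powersetCard (k - 1)).filter (fun D => D ∪ {x} ∈ F)) ∩
      Rx n k d x F = ∅ := by
  rw [Finset.eq_empty_iff_forall_notMem]
  intro D hD
  rw [Finset.mem_inter, Finset.mem_filter] at hD
  obtain ⟨⟨hDpow, hDA⟩, hDR⟩ := hD
  rw [Rx, Finset.mem_filter] at hDR
  obtain ⟨-, B, hB, hxB, hsub, hcard⟩ := hDR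
  apply hfree
  set A := D ∪ {x} with hAdef
  set S := D ∩ B with hS
  have hSB : S ⊆ B := Finset.inter_subset_right
  set a : Fin (d - 2) → ℕ := fun i => (S.orderIsoOfFin hcard i : ℕ) with ha
  have hainj : Function.Injective a := by
    intro i j hij
    exact (S.orderIsoOfFin hcard).injective (Subtype.ext hij)
  have haS : ∀ i, a i ∈ S := fun i => (S.orderIsoOfFin hcard i).2
  have himg : Finset.image a Finset.univ = S := by
    ext y
    simp only [Finset.mem_image, Finset.mem_univ, true_and]
    constructor
    · rintro ⟨i, rfl⟩; exact haS i
    · intro hy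
      exact ⟨(S.orderIsoOfFin hcard).symm ⟨y, hy⟩,
        congrArg Subtype.val ((S.orderIsoOfFin hcard).apply_symm_apply ⟨y, hy⟩)⟩
  have hmem : ∀ i : Fin (d - 2), ∃ C, C ∈ F ∧ B \ C = {a i} := by
    intro i
    have h := hsub (haS i)
    rw [alphaSet, Finset.mem_filter] at h
    obtain ⟨C, hCF, hCeq⟩ := h.2
    exact ⟨C, hCF, hCeq⟩
  choose C hCF hCeq using hmem
  have hBk : B.card = k := (Finset.mem_powersetCard.mp (hF hB)).2
  have hBA_eq : B ∩ A = S := by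
    ext y
    simp only [hAdef, hS, Finset.mem_inter, Finset.mem_union, Finset.mem_singleton]
    constructor
    · rintro ⟨hyB, hyD | rfl⟩
      · exact ⟨hyD, hyB⟩
      · exact absurd hyB hxB
    · rintro ⟨hyD, hyB⟩; exact ⟨hyB, Or.inl hyD⟩
  have hAF : A ∈ F := hDA
  refine ⟨B, A, a, C, hB, hAF, hCF, hainj, hBA_eq.trans himg.symm, hCeq, ?_⟩
  have hCinj : Function.Injective C := by
    intro i j hij
    apply hainj
    have : ({a i} : Finset ℕ) = {a j} := by rw [← hCeq i, ← hCeq j, hij]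
    simpa using this
  have hBneA : B ≠ A := by
    intro h
    have : x ∈ B := by
      rw [h, hAdef]; exact Finset.mem_union_right _ (Finset.mem_singleton_self x)
    exact hxB this
  have hBnotin : B ∉ Finset.image C Finset.univ := by
    simp only [Finset.mem_image, Finset.mem_univ, true_and]
    rintro ⟨i, hi⟩
    have := hCeq i
    rw [hi] at this
    simp only [Finset.sdiff_self] at this
    have : a i ∈ (∅ : Finset ℕ) := this ▸ Finset.mem_singleton_self _
    simp at this
  have hAnotin : A ∉ Finset.image C Finset.univ := by
    simp only [Finset.mem_image, Finset.mem_univ, true_and]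
    rintro ⟨i, hi⟩
    have h1 : B \ A = {a i} := by rw [← hi]; exact hCeq i
    have h2 : (B \ A).card = B.card - (B ∩ A).card := by
      rw [Finset.card_sdiff_add_card_inter B A |>.symm] at *
      omega
    rw [h1, hBA_eq, hcard, hBk] at h2
    simp only [Finset.card_singleton] at h2
    omega
  rw [Finset.card_insert_of_notMem, Finset.card_insert_of_notMem hAnotin,
    Finset.card_image_of_injective _ hCinj, Finset.card_univ, Fintype.card_fin]
  · omega
  · simp only [Finset.mem_insert]
    push_neg
    exact ⟨hBneA, hBnotin⟩
end

section
/- Let $k \le n/2$, let $\sigma$ be a cyclic ordering $a_0, a_1, \dots, a_{n-1}$ of $[n]$, and let $\mathcal{A}$ be a family of arcs of length $k$ (sets of the form $\{a_i, a_{i+1}, \dots, a_{i+k-1}\}$, indices mod $n$) that is pairwise intersecting. Then $|\mathcal{A}| \le k$. -/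
theorem stmt_16 (n k : ℕ) (hkn : 2 * k ≤ n)
    (a : ZMod n → ℕ) (ha : Function.Injective a)
    (A : Finset (Finset ℕ))
    (harc : ∀ X ∈ A, ∃ i : ZMod n,
      X = Finset.image (fun j : Fin k => a (i + (j : ℕ))) Finset.univ)
    (hint : ∀ X ∈ A, ∀ X' ∈ A, (X ∩ X').Nonempty) :
    A.card ≤ k := by
  classical
  rcases Nat.eq_zero_or_pos k with hk0 | hk
  · subst hk0
    simp only [Nat.le_zero, Finset.card_eq_zero]
    by_contra h
    obtain ⟨X, hX⟩ := Finset.nonempty_iff_ne_empty.mpr h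
    obtain ⟨i, hi⟩ := harc X hX
    have hne := hint X hX X hX
    rw [hi] at hne
    simp at hne
  · have hn : 0 < n := by omega
    haveI : NeZero n := ⟨hn.ne'⟩
    set arc : ZMod n → Finset ℕ :=
      fun i => Finset.image (fun j : Fin k => a (i + (j : ℕ))) Finset.univ with harcdef
    have nonint : ∀ i : ZMod n, arc i ∩ arc (i + (k : ℕ)) = ∅ := by
      intro i
      apply Finset.eq_empty_of_forall_notMem
      intro x hx
      rw [Finset.mem_inter] at hx
      obtain ⟨hx1, hx2⟩ := hx
      simp only [harcdef, Finset.mem_image, Finset.mem_univ, true_and] at hx1 hx2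
      obtain ⟨j, hj⟩ := hx1
      obtain ⟨j', hj'⟩ := hx2
      have heq : i + ((j : ℕ) : ZMod n) = i + (k : ℕ) + ((j' : ℕ) : ZMod n) :=
        ha (hj.trans hj'.symm)
      have h2 : ((j : ℕ) : ZMod n) = ((k + (j' : ℕ) : ℕ) : ZMod n) := by
        push_cast
        linear_combination heq
      have hj1 := j.isLt
      have hj2 := j'.isLt
      have hv : (j : ℕ) = k + (j' : ℕ) := by
        have hval := congrArg ZMod.val h2
        rwa [ZMod.val_cast_of_lt (by omega), ZMod.val_cast_of_lt (by omega)] at hval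
      omega
    rcases Finset.eq_empty_or_nonempty A with hA | ⟨X0, hX0⟩
    · simp [hA]
    obtain ⟨i0, hi0⟩ := harc X0 hX0
    have window : ∀ X ∈ A, ∃ t : ℕ, t < k ∧
        (X = arc (i0 + (t : ZMod n)) ∨ X = arc (i0 + (t : ZMod n) - (k : ℕ))) := by
      intro X hX
      obtain ⟨i, hi⟩ := harc X hX
      obtain ⟨x, hx⟩ := hint X hX X0 hX0
      rw [Finset.mem_inter, hi, hi0] at hx
      obtain ⟨hx1, hx2⟩ := hx
      simp only [Finset.mem_image, Finset.mem_univ, true_and] at hx1 hx2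
      obtain ⟨j, hj⟩ := hx1
      obtain ⟨j', hj'⟩ := hx2
      have heq : i + ((j : ℕ) : ZMod n) = i0 + ((j' : ℕ) : ZMod n) :=
        ha (hj.trans hj'.symm)
      have hj1 := j.isLt
      have hj2 := j'.isLt
      by_cases hle : (j : ℕ) ≤ (j' : ℕ)
      · refine ⟨(j' : ℕ) - (j : ℕ), by omega, Or.inl ?_⟩
        have hc : ((((j' : ℕ) - (j : ℕ)) : ℕ) : ZMod n)
            = ((j' : ℕ) : ZMod n) - ((j : ℕ) : ZMod n) := by
          rw [Nat.cast_sub hle]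
        have hieq : i = i0 + ((((j' : ℕ) - (j : ℕ)) : ℕ) : ZMod n) := by
          rw [hc]
          linear_combination heq
        rw [hi, hieq]
      · refine ⟨(j' : ℕ) + k - (j : ℕ), by omega, Or.inr ?_⟩
        have hle2 : (j : ℕ) ≤ (j' : ℕ) + k := by omega
        have hc : ((((j' : ℕ) + k - (j : ℕ)) : ℕ) : ZMod n)
            = ((j' : ℕ) : ZMod n) + (k : ZMod n) - ((j : ℕ) : ZMod n) := by
          rw [Nat.cast_sub hle2]
          push_cast
          ring
        have hieq : i = i0 + ((((j' : ℕ) + k - (j : ℕ)) : ℕ) : ZMod n) - (k : ℕ) := by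
          rw [hc]
          linear_combination heq
        rw [hi, hieq]
    have key : ∀ X ∈ A, ∀ X' ∈ A, ∀ t : ℕ,
        (X = arc (i0 + (t : ZMod n)) ∨ X = arc (i0 + (t : ZMod n) - (k : ℕ))) →
        (X' = arc (i0 + (t : ZMod n)) ∨ X' = arc (i0 + (t : ZMod n) - (k : ℕ))) →
        X = X' := by
      intro X hX X' hX' t h1 h2
      have hdisj : arc (i0 + (t : ZMod n) - (k : ℕ)) ∩ arc (i0 + (t : ZMod n)) = ∅ := by
        have hni := nonint (i0 + (t : ZMod n) - (k : ℕ))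
        rwa [sub_add_cancel] at hni
      rcases h1 with h1 | h1 <;> rcases h2 with h2 | h2
      · rw [h1, h2]
      · exfalso
        obtain ⟨x, hx⟩ := hint X hX X' hX'
        rw [h1, h2, Finset.inter_comm, hdisj] at hx
        exact absurd hx (Finset.notMem_empty x)
      · exfalso
        obtain ⟨x, hx⟩ := hint X hX X' hX'
        rw [h1, h2, hdisj] at hx
        exact absurd hx (Finset.notMem_empty x)
      · rw [h1, h2]
    set f : Finset ℕ → ℕ := fun X =>
      if h : ∃ t : ℕ, t < k ∧
          (X = arc (i0 + (t : ZMod n)) ∨ X = arc (i0 + (t : ZMod n) - (k : ℕ)))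
      then h.choose else 0 with hfdef
    have fspec : ∀ X ∈ A, f X < k ∧
        (X = arc (i0 + (f X : ZMod n)) ∨ X = arc (i0 + (f X : ZMod n) - (k : ℕ))) := by
      intro X hX
      have hex := window X hX
      simp only [hfdef, dif_pos hex]
      exact hex.choose_spec
    have hmem : ∀ X ∈ A, f X ∈ Finset.range k := by
      intro X hX
      exact Finset.mem_range.mpr (fspec X hX).1
    have hinj : Set.InjOn f A := by
      intro X hX X' hX' hff
      obtain ⟨h1, h2⟩ := fspec X hX
      obtain ⟨h1', h2'⟩ := fspec X' hX'
      rw [hff] at h2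
      exact key X hX X' hX' (f X') h2 h2'
    calc A.card ≤ (Finset.range k).card := Finset.card_le_card_of_injOn f hmem hinj
      _ = k := Finset.card_range k
end

section
/- Let $3 \le d \le k$, $n \ge 2k$, and suppose $\mathcal{F} \subseteq \binom{[n]}{k}$ contains the full star centered at $x_0$ (i.e., every $k$-set containing $x_0$ is in $\mathcal{F}$) and contains some set $B' \in \mathcal{F}$ with $x_0 \notin B'$. Then every element of $\mathcal{F}$ is contained in some $d$-cluster in $\mathcal{F}$. -/
open Finset

theorem Finset.insert_erase_mem_powersetCard {α : Type*} [DecidableEq α] {s t : Finset α}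
    {k : ℕ} {a x : α} (hs : s ∈ t.powersetCard k) (ha : a ∈ s) (hxt : x ∈ t) (hxs : x ∉ s) :
    insert x (s.erase a) ∈ t.powersetCard k := by
  obtain ⟨hst, rfl⟩ := mem_powersetCard.mp hs
  refine mem_powersetCard.mpr ⟨insert_subset hxt ((erase_subset a s).trans hst), ?_⟩
  rw [card_insert_of_notMem fun h => hxs (mem_of_mem_erase h), card_erase_add_one ha]

theorem exists_family_erase_of_card_eq {α : Type*} [DecidableEq α] {U P : Finset α} {x : α}
    {k m : ℕ} (hxP : x ∈ P) (hPU : P ⊆ U) (hU : #U = 2 * k) (hP : #P = k) (hm : m ≤ k) :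
    ∃ 𝒬 : Finset (Finset α), #𝒬 = m ∧
      ∀ A ∈ 𝒬, x ∈ A ∧ A ⊆ U ∧ Disjoint A (P.erase x) ∧ #A = k := by
  obtain ⟨S, hSU, hS⟩ :=
    exists_subset_card_eq (show m ≤ #(U \ P) by rw [card_sdiff_of_subset hPU]; omega)
  set V := U \ P.erase x
  have hSV : S ⊆ V := hSU.trans (sdiff_subset_sdiff subset_rfl (erase_subset x P))
  refine ⟨S.image V.erase, by rw [card_image_of_injOn ((erase_injOn V).mono hSV), hS], ?_⟩
  rintro A hA
  obtain ⟨w, hw, rfl⟩ := mem_image.mp hA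
  have hwx : w ≠ x := fun h => (mem_sdiff.mp (hSU hw)).2 (h ▸ hxP)
  have hk : 0 < k := hP ▸ card_pos.mpr ⟨x, hxP⟩
  refine ⟨mem_erase.mpr ⟨hwx.symm, mem_sdiff.mpr ⟨hPU hxP, notMem_erase x P⟩⟩,
    (erase_subset w V).trans sdiff_subset,
    disjoint_of_subset_left (erase_subset w V) sdiff_disjoint, ?_⟩
  rw [card_erase_of_mem (hSV hw), card_sdiff_of_subset ((erase_subset x P).trans hPU),
    card_erase_of_mem hxP]
  omega

theorem exists_isCluster {U P Z : Finset ℕ} {x k d : ℕ} (hd : 3 ≤ d) (hdk : d ≤ k)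
    (hU : #U = 2 * k) (hPU : P ⊆ U) (hP : #P = k) (hxP : x ∈ P) (hZU : Z ⊆ U) (hxZ : x ∉ Z) :
    ∃ C, P ∈ C ∧ Z ∈ C ∧ IsCluster k d C ∧ ∀ A ∈ C, A = Z ∨ x ∈ A ∧ A ⊆ U ∧ #A = k := by
  obtain ⟨𝒬, h𝒬, h𝒬mem⟩ := exists_family_erase_of_card_eq hxP hPU hU hP (show d - 2 ≤ k by omega)
  obtain ⟨Q, hQ⟩ : 𝒬.Nonempty := card_pos.mp (by omega)
  have hP𝒬 : P ∉ 𝒬 := fun h => by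
    obtain ⟨y, hy⟩ : (P.erase x).Nonempty := card_pos.mp (by rw [card_erase_of_mem hxP]; omega)
    exact disjoint_left.mp (h𝒬mem P h).2.2.1 (mem_of_mem_erase hy) hy
  have hmem : ∀ A ∈ insert P 𝒬, x ∈ A ∧ A ⊆ U ∧ #A = k := by
    rintro A hA
    rcases mem_insert.mp hA with rfl | hA
    · exact ⟨hxP, hPU, hP⟩
    · obtain ⟨hxA, hAU, -, hAk⟩ := h𝒬mem A hA
      exact ⟨hxA, hAU, hAk⟩
  have hZ𝒬 : Z ∉ insert P 𝒬 := fun h => hxZ (hmem Z h).1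
  refine ⟨insert Z (insert P 𝒬), mem_insert_of_mem (mem_insert_self P 𝒬), mem_insert_self _ _,
    ⟨?_, ?_, ?_⟩, fun A hA => (mem_insert.mp hA).imp_right (hmem A)⟩
  · rw [card_insert_of_notMem hZ𝒬, card_insert_of_notMem hP𝒬, h𝒬]
    omega
  · refine (card_le_card (Finset.sup_le fun A hA => ?_)).trans hU.le
    rcases mem_insert.mp hA with rfl | hA
    exacts [hZU, (hmem A hA).2.1]
  · intro y
    by_cases hyx : y = x
    · exact ⟨Z, mem_insert_self _ _, hyx ▸ hxZ⟩
    by_cases hyP : y ∈ P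
    · refine ⟨Q, mem_insert_of_mem (mem_insert_of_mem hQ), fun hyQ => ?_⟩
      exact disjoint_left.mp (h𝒬mem Q hQ).2.2.1 hyQ (mem_erase.mpr ⟨hyx, hyP⟩)
    · exact ⟨P, mem_insert_of_mem (mem_insert_self P 𝒬), hyP⟩

theorem exists_isCluster_of_star {T : Finset ℕ} {F : Finset (Finset ℕ)} {k d x₀ : ℕ}
    (hd : 3 ≤ d) (hdk : d ≤ k) (hT : 2 * k ≤ #T) (hF : F ⊆ T.powersetCard k)
    (hstar : ∀ B ∈ T.powersetCard k, x₀ ∈ B → B ∈ F) {P Z : Finset ℕ}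
    (hP : P ∈ T.powersetCard k) (hxP : x₀ ∈ P) (hZ : Z ∈ F) (hxZ : x₀ ∉ Z) :
    ∃ C ⊆ F, P ∈ C ∧ Z ∈ C ∧ IsCluster k d C := by
  obtain ⟨hPT, hPk⟩ := mem_powersetCard.mp hP
  obtain ⟨hZT, hZk⟩ := mem_powersetCard.mp (hF hZ)
  obtain ⟨U, hPZU, hUT, hU⟩ := exists_subsuperset_card_eq (union_subset hPT hZT)
    ((card_union_le P Z).trans (by omega)) hT
  obtain ⟨C, hPC, hZC, hC, hCmem⟩ := exists_isCluster hd hdk hU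
    (subset_union_left.trans hPZU) hPk hxP (subset_union_right.trans hPZU) hxZ
  refine ⟨C, fun A hA => ?_, hPC, hZC, hC⟩
  obtain rfl | ⟨hxA, hAU, hAk⟩ := hCmem A hA
  exacts [hZ, hstar A (mem_powersetCard.mpr ⟨hAU.trans hUT, hAk⟩) hxA]

theorem stmt_18 (n k d : ℕ) (hd : 3 ≤ d) (hdk : d ≤ k) (hkn : 2 * k ≤ n)
    (F : Finset (Finset ℕ)) (hF : F ⊆ (Finset.Icc 1 n).powersetCard k)
    (x₀ : ℕ) (hx₀ : x₀ ∈ Finset.Icc 1 n)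
    (hstar : ∀ B ∈ (Finset.Icc 1 n).powersetCard k, x₀ ∈ B → B ∈ F)
    (B' : Finset ℕ) (hB' : B' ∈ F) (hxB' : x₀ ∉ B') :
    ∀ B ∈ F, ∃ C ⊆ F, B ∈ C ∧ IsCluster k d C := by
  intro B hB
  have hT : 2 * k ≤ #(Icc 1 n) := by simpa using hkn
  by_cases hxB : x₀ ∈ B
  · obtain ⟨C, hCF, hBC, -, hC⟩ := exists_isCluster_of_star hd hdk hT hF hstar (hF hB) hxB hB' hxB'
    exact ⟨C, hCF, hBC, hC⟩
  · obtain ⟨b, hb⟩ : B.Nonempty := card_pos.mp (by rw [(mem_powersetCard.mp (hF hB)).2]; omega)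
    obtain ⟨C, hCF, -, hBC, hC⟩ := exists_isCluster_of_star hd hdk hT hF hstar
      (insert_erase_mem_powersetCard (hF hB) hb hx₀ hxB) (mem_insert_self x₀ _) hB hxB
    exact ⟨C, hCF, hBC, hC⟩
end

section
/- Let $2 \le k < n$, $x \in [n]$, and $\mathcal{F} \subseteq \binom{[n]}{k}$. Suppose for every $D \in \mathcal{S}_x(\mathcal{F})$ that $|\bigtriangledown_{\mathcal{F}}(D)| = 1$. Then there is a bijection between $\mathcal{S}_x(\mathcal{F})$ and the set of pairs $(B, y)$ with $B \in \mathcal{F}^{-x}$ and $y \in B \setminus \alpha_{\mathcal{F}}(B)$; in particular $\sum_{B \in \mathcal{F}^{-x}} |B \setminus \alpha_{\mathcal{F}}(B)| = |\mathcal{S}_x(\mathcal{F})|$. -/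
lemma mem_Sx_of_pair (n k x : ℕ) (F : Finset (Finset ℕ))
    (hF : F ⊆ (Finset.Icc 1 n).powersetCard k)
    {B : Finset ℕ} {y : ℕ} (hB : B ∈ F) (hxB : x ∉ B)
    (hy : y ∈ B \ alphaSet F B) :
    B \ {y} ∈ Sx n k x F := by
  obtain ⟨hBsub, hBcard⟩ := Finset.mem_powersetCard.mp (hF hB)
  rw [Finset.mem_sdiff] at hy
  refine Finset.mem_filter.mpr ⟨Finset.mem_powersetCard.mpr ⟨?_, ?_⟩,
    B, hB, hxB, y, hy.1, hy.2, Finset.sdiff_union_of_subset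
      (Finset.singleton_subset_iff.mpr hy.1)⟩
  · intro a ha
    rw [Finset.mem_sdiff] at ha ⊢
    exact ⟨hBsub ha.1, fun h => hxB ((Finset.mem_singleton.mp h) ▸ ha.1)⟩
  · rw [Finset.card_sdiff_of_subset (Finset.singleton_subset_iff.mpr hy.1),
      Finset.card_singleton, hBcard]

lemma pair_eq (n k x : ℕ) (F : Finset (Finset ℕ))
    (hF : F ⊆ (Finset.Icc 1 n).powersetCard k)
    (h1 : ∀ D ∈ Sx n k x F, (F.filter (fun B => D ⊆ B)).card = 1)
    {B₁ B₂ : Finset ℕ} {y₁ y₂ : ℕ}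
    (hB₁ : B₁ ∈ F) (hx₁ : x ∉ B₁) (hy₁ : y₁ ∈ B₁ \ alphaSet F B₁)
    (hB₂ : B₂ ∈ F) (hx₂ : x ∉ B₂) (hy₂ : y₂ ∈ B₂ \ alphaSet F B₂)
    (hD : B₁ \ {y₁} = B₂ \ {y₂}) : B₁ = B₂ ∧ y₁ = y₂ := by
  have hmem := mem_Sx_of_pair n k x F hF hB₁ hx₁ hy₁
  obtain ⟨a, ha⟩ := Finset.card_eq_one.mp (h1 _ hmem)
  have m1 : B₁ ∈ F.filter (fun B => B₁ \ {y₁} ⊆ B) :=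
    Finset.mem_filter.mpr ⟨hB₁, Finset.sdiff_subset⟩
  have m2 : B₂ ∈ F.filter (fun B => B₁ \ {y₁} ⊆ B) :=
    Finset.mem_filter.mpr ⟨hB₂, hD ▸ Finset.sdiff_subset⟩
  rw [ha, Finset.mem_singleton] at m1 m2
  have hBe : B₁ = B₂ := m1.trans m2.symm
  subst hBe
  refine ⟨rfl, ?_⟩
  rw [Finset.mem_sdiff] at hy₁
  have : y₁ ∉ B₁ \ {y₂} := hD ▸ (by simp)
  rw [Finset.mem_sdiff] at this
  push_neg at this
  exact Finset.mem_singleton.mp (this hy₁.1)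

lemma pair_of_mem_Sx (n k x : ℕ) (hk : 2 ≤ k) (F : Finset (Finset ℕ))
    (hF : F ⊆ (Finset.Icc 1 n).powersetCard k)
    {D : Finset ℕ} (hD : D ∈ Sx n k x F) :
    ∃ B ∈ F, x ∉ B ∧ ∃ y ∈ B \ alphaSet F B, B \ {y} = D := by
  obtain ⟨hDpow, B, hB, hxB, y, hyB, hyα, hUy⟩ := Finset.mem_filter.mp hD
  obtain ⟨_, hDcard⟩ := Finset.mem_powersetCard.mp hDpow
  obtain ⟨_, hBcard⟩ := Finset.mem_powersetCard.mp (hF hB)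
  have hyD : y ∉ D := by
    intro hyD
    have : D ∪ {y} = D := by
      rw [Finset.union_eq_left]; simpa using hyD
    rw [this] at hUy
    rw [hUy] at hDcard
    omega
  refine ⟨B, hB, hxB, y, Finset.mem_sdiff.mpr ⟨hyB, hyα⟩, ?_⟩
  subst hUy
  ext a
  simp only [Finset.mem_sdiff, Finset.mem_union, Finset.mem_singleton]
  constructor
  · rintro ⟨h | h, h2⟩
    · exact h
    · exact absurd h h2
  · intro ha
    exact ⟨Or.inl ha, fun h => hyD (h ▸ ha)⟩

theorem stmt_19 (n k : ℕ) (hk : 2 ≤ k) (hkn : k < n)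
    (x : ℕ) (hx : x ∈ Finset.Icc 1 n)
    (F : Finset (Finset ℕ)) (hF : F ⊆ (Finset.Icc 1 n).powersetCard k)
    (h1 : ∀ D ∈ Sx n k x F, (F.filter (fun B => D ⊆ B)).card = 1) :
    Nonempty ({D // D ∈ Sx n k x F} ≃
      {p : Finset ℕ × ℕ // p.1 ∈ F ∧ x ∉ p.1 ∧ p.2 ∈ p.1 \ alphaSet F p.1}) ∧
    ∑ B ∈ F.filter (fun B => x ∉ B), (B \ alphaSet F B).card
      = (Sx n k x F).card := by
  constructor
  · have hbij : Function.Bijective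
        (fun p : {p : Finset ℕ × ℕ // p.1 ∈ F ∧ x ∉ p.1 ∧ p.2 ∈ p.1 \ alphaSet F p.1} =>
          (⟨p.1.1 \ {p.1.2}, mem_Sx_of_pair n k x F hF p.2.1 p.2.2.1 p.2.2.2⟩ :
            {D // D ∈ Sx n k x F})) := by
      constructor
      · rintro ⟨⟨B₁, y₁⟩, h₁, h₂, h₃⟩ ⟨⟨B₂, y₂⟩, g₁, g₂, g₃⟩ heq
        simp only [Subtype.mk.injEq] at heq
        obtain ⟨hB, hy⟩ := pair_eq n k x F hF h1 h₁ h₂ h₃ g₁ g₂ g₃ heq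
        exact Subtype.ext (Prod.ext hB hy)
      · rintro ⟨D, hD⟩
        obtain ⟨B, hB, hxB, y, hy, hBD⟩ := pair_of_mem_Sx n k x hk F hF hD
        exact ⟨⟨(B, y), hB, hxB, hy⟩, Subtype.ext hBD⟩
    exact ⟨(Equiv.ofBijective _ hbij).symm⟩
  · rw [← Finset.card_sigma]
    apply Finset.card_bij (fun a _ => a.1 \ {a.2})
    · rintro ⟨B, y⟩ ha
      rw [Finset.mem_sigma, Finset.mem_filter] at ha
      exact mem_Sx_of_pair n k x F hF ha.1.1 ha.1.2 ha.2
    · rintro ⟨B₁, y₁⟩ ha ⟨B₂, y₂⟩ hb heq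
      rw [Finset.mem_sigma, Finset.mem_filter] at ha hb
      obtain ⟨hB, hy⟩ := pair_eq n k x F hF h1 ha.1.1 ha.1.2 ha.2 hb.1.1 hb.1.2 hb.2 heq
      exact Sigma.ext hB (heq_of_eq hy)
    · intro D hD
      obtain ⟨B, hB, hxB, y, hy, hBD⟩ := pair_of_mem_Sx n k x hk F hF hD
      exact ⟨⟨B, y⟩, Finset.mem_sigma.mpr ⟨Finset.mem_filter.mpr ⟨hB, hxB⟩, hy⟩, hBD⟩
end
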